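/- arXiv:0910.1741 — 3 statements merged into one kernel-verified Lean document; each statement's English description precedes it below -/
import Mathlib

section
/- Let p ∈ [1,∞] and let q ∈ [1,∞] be its Hölder conjugate (1/p + 1/q = 1). If condition (C_p) holds, then condition (G_q) holds (condition (G_∞) in the case p = 1). No regularity assumption on (P_x) beyond weak continuity in x is required. -/
open MeasureTheory ENNReal NNReal Metric Set Filter

noncomputable section

namespace Kuwada

variable {X : Type*} [MetricSpace X] [MeasurableSpace X] [BorelSpace X]

/-- Every pair of points is joined by a constant-speed minimal geodesic for `dd`. -/
def GeodesicFor (dd : X → X → ℝ) : Prop :=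
  ∀ x y : X, ∃ γ : ℝ → X, γ 0 = x ∧ γ 1 = y ∧
    ∀ s ∈ Icc (0:ℝ) 1, ∀ t ∈ Icc (0:ℝ) 1, dd (γ s) (γ t) = |s - t| * dd x y

/-- `dd` is a continuous distance function on `X`. -/
structure IsContDist (dd : X → X → ℝ) : Prop where
  symm : ∀ x y, dd x y = dd y x
  triangle : ∀ x y z, dd x z ≤ dd x y + dd y z
  eq_zero_iff : ∀ x y, dd x y = 0 ↔ x = y
  cont : Continuous fun z : X × X => dd z.1 z.2

/-- `π` is a coupling of `μ` and `ν`. -/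
def IsCoupling (μ ν : Measure X) (π : Measure (X × X)) : Prop :=
  π.map Prod.fst = μ ∧ π.map Prod.snd = ν

/-- The cost `ρ^W_p (μ, ν)`: infimum of the `L^p (π)`-norm of `ρ` over couplings `π`. -/
def wCost (ρ : X → X → ℝ) (p : ℝ≥0∞) (μ ν : Measure X) : ℝ≥0∞ :=
  ⨅ (π : Measure (X × X)) (_ : IsCoupling μ ν π), eLpNorm (fun z => ρ z.1 z.2) p π

/-- `|∇_dd f| (x) = lim_{r ↓ 0} sup_{0 < dd x y ≤ r} |f x - f y| / dd x y`. -/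
def gradNorm (dd : X → X → ℝ) (f : X → ℝ) (x : X) : ℝ≥0∞ :=
  ⨅ (r : ℝ) (_ : 0 < r),
    ⨆ (y : X) (_ : 0 < dd x y ∧ dd x y ≤ r), ENNReal.ofReal (|f x - f y| / dd x y)

/-- `f ∈ C_{b,L} (X)`: bounded and Lipschitz (w.r.t. the metric `d`). -/
def BddLip (f : X → ℝ) : Prop :=
  (∃ C, ∀ x, |f x| ≤ C) ∧ (∃ K, LipschitzWith K f)

/-- `P f (x) = ∫ f dP_x`. -/
def heatOp (P : X → Measure X) (f : X → ℝ) (x : X) : ℝ := ∫ y, f y ∂ P x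

/-- `x ↦ P_x` is continuous w.r.t. the topology of weak convergence. -/
def WeaklyContinuous (P : X → Measure X) : Prop :=
  ∀ f : BoundedContinuousFunction X ℝ, Continuous fun x => ∫ y, f y ∂ P x

/-- Condition `(C_p)`. -/
def CondC (P : X → Measure X) (dt : X → X → ℝ) (p : ℝ≥0∞) : Prop :=
  ∀ μ ν : Measure X, IsProbabilityMeasure μ → IsProbabilityMeasure ν →
    wCost dist p (μ.bind P) (ν.bind P) ≤ wCost dt p μ ν

/-- Condition `(G_q)` for finite `q`. -/
def CondG (P : X → Measure X) (dt : X → X → ℝ) (q : ℝ) : Prop :=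
  ∀ f : X → ℝ, BddLip f → ∀ x : X,
    gradNorm dt (heatOp P f) x ≤ (∫⁻ y, gradNorm dist f y ^ q ∂ P x) ^ (1 / q)

/-- Condition `(G_∞)`. -/
def CondGInf (P : X → Measure X) (dt : X → X → ℝ) : Prop :=
  ∀ f : X → ℝ, BddLip f →
    (⨆ x, gradNorm dt (heatOp P f) x) ≤ ⨆ x, gradNorm dist f x

/-- `g` is an upper gradient of `f`. -/
def IsUpperGradient (f : X → ℝ) (g : X → ℝ≥0∞) : Prop :=
  ∀ l : ℝ, 0 ≤ l → ∀ γ : ℝ → X, HasUnitSpeedOn γ (Icc 0 l) →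
    ENNReal.ofReal |f (γ l) - f (γ 0)| ≤ ∫⁻ s in Icc (0:ℝ) l, g (γ s)

/-- local volume doubling. -/
def LocDoubling (v : Measure X) : Prop :=
  ∃ D : ℝ≥0, 0 < D ∧ ∃ R₁ : ℝ, 0 < R₁ ∧ ∀ (x : X) (r : ℝ), 0 < r → r < R₁ →
    v (ball x (2 * r)) ≤ (D : ℝ≥0∞) * v (ball x r)

/-- `(X, d, v)` supports a `(1, p₀)`-local Poincaré inequality. -/
def LocPoincare (v : Measure X) (p₀ : ℝ) : Prop :=
  ∀ R : ℝ, 0 < R → ∃ lam C_P : ℝ, 1 ≤ lam ∧ 0 < C_P ∧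
    ∀ f : X → ℝ, LocallyIntegrable f v → ∀ g : X → ℝ≥0∞, IsUpperGradient f g →
      ∀ (x : X) (r : ℝ), 0 < r → r < R →
        (∫⁻ y in ball x r,
          ENNReal.ofReal |f y - (v (ball x r)).toReal⁻¹ * ∫ z in ball x r, f z ∂v| ∂v)
        ≤ ENNReal.ofReal (C_P * r) * (∫⁻ y in ball x (lam * r), g y ^ p₀ ∂v) ^ (1 / p₀)

/-- Each `P_x` is absolutely continuous w.r.t. `v`, with density continuous in `x`. -/
def ContinuousDensity (P : X → Measure X) (v : Measure X) : Prop :=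
  ∃ k : X → X → ℝ≥0∞, (∀ x, P x = v.withDensity (k x)) ∧ ∀ y, Continuous fun x => k x y

/-- Assumption 2.2: existence of a positive Radon measure `v` with the stated properties. -/
def Regularity (P : X → Measure X) (v : Measure X) (p₀ : ℝ) : Prop :=
  IsLocallyFiniteMeasure v ∧ v.Regular ∧ LocDoubling v ∧
    1 ≤ p₀ ∧ LocPoincare v p₀ ∧ ContinuousDensity P v

end Kuwada

/-!
Testing `(C_p)` on Dirac masses shows that `P_x` and `P_y` admit couplings `π` with
`‖d‖_{L^p(π)}` arbitrarily close to `d̃(x, y)`, and `|P f(x) - P f(y)| ≤ ∫ |f(z₁) - f(z₂)| dπ`.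

For `p = 1`, comparing `f` along `d`-geodesics with a linear function shows that `f` is
`‖∇_d f‖_∞`-Lipschitz, so this integral is at most `‖∇_d f‖_∞ ‖d‖_{L^1(π)}`, which gives `(G_∞)`.

For `p > 1`, let `|∇f|_ε` be the slope of `f` at scale `ε`. Pointwise
`|f(z₁) - f(z₂)| ≤ |∇f|_ε(z₁) d(z₁, z₂) + Lip(f) d(z₁, z₂)^p / ε^(p-1)`; by Hölder's inequality the
first term integrates to at most `‖|∇f|_ε‖_{L^q(P_x)} ‖d‖_{L^p(π)}`, and the second one is
`o(d̃(x, y))` (for `p = ∞` it vanishes, as `d < ε` `π`-a.e.). Hence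
`|∇_{d̃} P f|(x) ≤ ‖|∇f|_ε‖_{L^q(P_x)}` for every `ε > 0`, and monotone convergence as `ε ↓ 0`
gives `(G_q)`.
-/

lemma ENNReal.rpow_sub_one_mul_self (x : ℝ≥0∞) {p : ℝ} (hp : 1 ≤ p) :
    x ^ (p - 1) * x = x ^ p := by
  calc x ^ (p - 1) * x = x ^ (p - 1) * x ^ (1 : ℝ) := by rw [ENNReal.rpow_one]
    _ = x ^ p := by
      rw [← ENNReal.rpow_add_of_nonneg _ _ (sub_nonneg.2 hp) zero_le_one, sub_add_cancel]

lemma ENNReal.iInf_rpow_of_pos {ι : Sort*} [Nonempty ι] (a : ι → ℝ≥0∞) {c : ℝ} (hc : 0 < c) :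
    (⨅ i, a i) ^ c = ⨅ i, a i ^ c :=
  map_iInf (ENNReal.orderIsoRpow c hc) a

namespace Kuwada

open Topology

section GradNorm

variable {X : Type*} {dd : X → X → ℝ} {g : X → ℝ} {x : X}

lemma exists_pos_forall_abs_sub_lt_of_gradNorm_lt {L : ℝ}
    (h : gradNorm dd g x < ENNReal.ofReal L) :
    ∃ ρ > 0, ∀ y, 0 < dd x y → dd x y ≤ ρ → |g x - g y| < L * dd x y := by
  obtain ⟨ρ, hρ, hlt⟩ := by simpa only [gradNorm, iInf_lt_iff] using h
  refine ⟨ρ, hρ, fun y hy hyρ => ?_⟩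
  have hy' := (le_iSup₂ (f := fun y (_ : 0 < dd x y ∧ dd x y ≤ ρ) =>
    ENNReal.ofReal (|g x - g y| / dd x y)) y ⟨hy, hyρ⟩).trans_lt hlt
  exact (div_lt_iff₀ hy).1 ((ENNReal.ofReal_lt_ofReal_iff'.1 hy').1)

lemma gradNorm_le_of_continuousAt {B : ℝ≥0∞ → ℝ≥0∞} (hB : ContinuousAt B 0) {r : ℝ}
    (hr : 0 < r) (h : ∀ y, 0 < dd x y → dd x y < r →
      ENNReal.ofReal |g x - g y| ≤ B (ENNReal.ofReal (dd x y)) * ENNReal.ofReal (dd x y)) :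
    gradNorm dd g x ≤ B 0 := by
  refine le_of_forall_gt_imp_ge_of_dense fun L hL => ?_
  have hBL : ∀ᶠ s in 𝓝 (0 : ℝ), B (ENNReal.ofReal s) < L :=
    (hB.comp_of_eq ENNReal.continuous_ofReal.continuousAt ENNReal.ofReal_zero).eventually
      (gt_mem_nhds (by simpa using hL))
  obtain ⟨δ, hδ, hδL⟩ := Metric.eventually_nhds_iff.1 hBL
  refine iInf₂_le_of_le (min δ r / 2) (by positivity) (iSup₂_le fun y hy => ?_)
  have hyδ : dd x y < δ := by linarith [min_le_left δ r, hy.2]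
  have hyr : dd x y < r := by linarith [min_le_right δ r, hy.2]
  rw [ENNReal.ofReal_div_of_pos hy.1]
  refine ENNReal.div_le_of_le_mul ((h y hy.1 hyr).trans (mul_le_mul_left (hδL ?_).le _))
  rwa [Real.dist_eq, sub_zero, abs_of_pos hy.1]

end GradNorm

section Slope

variable {X : Type*} [MetricSpace X] {f : X → ℝ}

/-- The strict inequality `dist z w < ε` makes `localSlope f ε` lower semicontinuous. -/
def localSlope (f : X → ℝ) (ε : ℝ) (z : X) : ℝ≥0∞ :=
  ⨆ (w : X) (_ : 0 < dist z w ∧ dist z w < ε), ENNReal.ofReal (|f z - f w| / dist z w)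

lemma localSlope_mono (f : X → ℝ) (z : X) : Monotone fun ε => localSlope f ε z :=
  fun _ _ h => iSup₂_mono' fun w hw => ⟨w, ⟨hw.1, hw.2.trans_le h⟩, le_rfl⟩

lemma localSlope_le_of_lipschitzWith {K : ℝ≥0} (hf : LipschitzWith K f) (ε : ℝ) (z : X) :
    localSlope f ε z ≤ K := by
  refine iSup₂_le fun w hw => ?_
  rw [← ENNReal.ofReal_coe_nnreal]
  exact ENNReal.ofReal_le_ofReal <|
    (div_le_iff₀ hw.1).2 (by simpa [Real.dist_eq] using hf.dist_le_mul z w)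

lemma ofReal_abs_sub_le_localSlope_mul (f : X → ℝ) {ε : ℝ} {a b : X} (h : dist a b < ε) :
    ENNReal.ofReal |f a - f b| ≤ localSlope f ε a * ENNReal.ofReal (dist a b) := by
  rcases eq_or_ne a b with rfl | hab
  · simp
  have hd : 0 < dist a b := dist_pos.2 hab
  calc ENNReal.ofReal |f a - f b|
      = ENNReal.ofReal (|f a - f b| / dist a b) * ENNReal.ofReal (dist a b) := by
        rw [← ENNReal.ofReal_mul (by positivity), div_mul_cancel₀ _ hd.ne']
    _ ≤ localSlope f ε a * ENNReal.ofReal (dist a b) := by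
        gcongr
        exact le_iSup₂ (f := fun w (_ : 0 < dist a w ∧ dist a w < ε) =>
          ENNReal.ofReal (|f a - f w| / dist a w)) b ⟨hd, h⟩

lemma ofReal_abs_sub_le_localSlope_mul_add {K : ℝ≥0} (hf : LipschitzWith K f) {ε : ℝ}
    (hε : 0 < ε) {p : ℝ} (hp : 1 ≤ p) (a b : X) :
    ENNReal.ofReal |f a - f b| ≤ localSlope f ε a * ENNReal.ofReal (dist a b) +
      K / ENNReal.ofReal ε ^ (p - 1) * ENNReal.ofReal (dist a b) ^ p := by
  rcases lt_or_ge (dist a b) ε with hab | hab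
  · exact (ofReal_abs_sub_le_localSlope_mul f hab).trans le_self_add
  refine le_add_left ?_
  set δ := ENNReal.ofReal (dist a b)
  have hεδ : ENNReal.ofReal ε ^ (p - 1) ≤ δ ^ (p - 1) :=
    ENNReal.rpow_le_rpow (ENNReal.ofReal_le_ofReal hab) (by linarith)
  have hε0 : ENNReal.ofReal ε ^ (p - 1) ≠ 0 :=
    (ENNReal.rpow_pos (ENNReal.ofReal_pos.2 hε) ENNReal.ofReal_ne_top).ne'
  have hεtop : ENNReal.ofReal ε ^ (p - 1) ≠ ∞ :=
    ENNReal.rpow_ne_top_of_nonneg (by linarith) ENNReal.ofReal_ne_top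
  calc ENNReal.ofReal |f a - f b| ≤ K * δ := by
        simpa only [edist_dist, Real.dist_eq] using hf.edist_le_mul a b
    _ = K * 1 * δ := by rw [mul_one]
    _ ≤ K * (δ ^ (p - 1) / ENNReal.ofReal ε ^ (p - 1)) * δ := by
        gcongr
        exact (ENNReal.div_self hε0 hεtop).symm.trans_le (ENNReal.div_le_div_right hεδ _)
    _ = K / ENNReal.ofReal ε ^ (p - 1) * δ ^ p := by
        rw [← δ.rpow_sub_one_mul_self hp, div_eq_mul_inv, div_eq_mul_inv]
        ring

lemma gradNorm_eq_iInf_localSlope (f : X → ℝ) (z : X) :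
    gradNorm dist f z = ⨅ n : ℕ, localSlope f (1 / (n + 1)) z := by
  refine le_antisymm (le_iInf fun n => ?_) (le_iInf₂ fun r hr => ?_)
  · have hlt : (1 : ℝ) / (n + 2) < 1 / (n + 1) := by gcongr; linarith
    exact iInf₂_le_of_le (1 / (n + 2)) (by positivity) <|
      iSup₂_mono' fun w hw => ⟨w, ⟨hw.1, hw.2.trans_lt hlt⟩, le_rfl⟩
  · obtain ⟨n, hn⟩ := exists_nat_one_div_lt hr
    exact iInf_le_of_le n <| iSup₂_mono' fun w hw => ⟨w, ⟨hw.1, hw.2.le.trans hn.le⟩, le_rfl⟩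

lemma lowerSemicontinuous_localSlope (hf : Continuous f) (ε : ℝ) :
    LowerSemicontinuous (localSlope f ε) := by
  refine lowerSemicontinuous_iSup fun w z c hc => ?_
  obtain ⟨hz, hcz⟩ := lt_iSup_iff.1 hc
  have hdist : Continuous fun z => dist z w := continuous_id.dist continuous_const
  have hU : IsOpen {z : X | 0 < dist z w ∧ dist z w < ε} :=
    (isOpen_lt continuous_const hdist).inter (isOpen_lt hdist continuous_const)
  have hg : ContinuousAt (fun z => ENNReal.ofReal (|f z - f w| / dist z w)) z :=
    ENNReal.continuous_ofReal.continuousAt.comp <|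
      ((hf.sub continuous_const).abs.continuousAt).div hdist.continuousAt hz.1.ne'
  filter_upwards [hU.mem_nhds hz, hg.eventually (lt_mem_nhds hcz)] with z' hz' hcz'
  exact hcz'.trans_le (le_iSup_of_le hz' le_rfl)

lemma BddLip.continuous (hf : BddLip f) : Continuous f :=
  let ⟨_, hK⟩ := hf.2
  hK.continuous

lemma eventually_slope_comp_lt {γ : ℝ → X} {D : ℝ} (hD : 0 < D)
    (hγ : ∀ s ∈ Icc (0 : ℝ) 1, ∀ t ∈ Icc (0 : ℝ) 1, dist (γ s) (γ t) = |s - t| * D)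
    {L : ℝ≥0} (hL : ∀ z, gradNorm dist f z ≤ L) {s : ℝ} (hs : s ∈ Ico (0 : ℝ) 1) {r : ℝ}
    (hr : L * D < r) : ∀ᶠ z in 𝓝[>] s, slope (f ∘ γ) s z < r := by
  have hlt : gradNorm dist f (γ s) < ENNReal.ofReal (r / D) := by
    refine (hL _).trans_lt ?_
    rw [← ENNReal.ofReal_coe_nnreal, ENNReal.ofReal_lt_ofReal_iff
      (div_pos ((by positivity : (0 : ℝ) ≤ L * D).trans_lt hr) hD)]
    exact (lt_div_iff₀ hD).2 hr
  obtain ⟨ρ, hρ, hρf⟩ := exists_pos_forall_abs_sub_lt_of_gradNorm_lt hlt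
  filter_upwards [Ioo_mem_nhdsGT (lt_min hs.2 (lt_add_of_pos_right s (div_pos hρ hD)))] with z hz
  have hzs : 0 < z - s := sub_pos.2 hz.1
  have hdist : dist (γ s) (γ z) = (z - s) * D := by
    rw [hγ s (Ico_subset_Icc_self hs) z ⟨hs.1.trans hz.1.le, hz.2.le.trans (min_le_left _ _)⟩,
      abs_sub_comm, abs_of_pos hzs]
  have hzρ : (z - s) * D ≤ ρ := by
    rw [← le_div_iff₀ hD]
    linarith [hz.2.trans_le (min_le_right _ _)]
  rw [slope_def_field, div_lt_iff₀ hzs]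
  calc (f ∘ γ) z - (f ∘ γ) s ≤ |f (γ s) - f (γ z)| := by
        rw [abs_sub_comm]
        exact le_abs_self _
    _ < r / D * dist (γ s) (γ z) := hρf (γ z) (hdist ▸ mul_pos hzs hD) (hdist ▸ hzρ)
    _ = r * (z - s) := by
        rw [hdist]
        field_simp

lemma lipschitzWith_of_gradNorm_le (hgeo : GeodesicFor (dist : X → X → ℝ)) (hf : Continuous f)
    {L : ℝ≥0} (hL : ∀ z, gradNorm dist f z ≤ L) : LipschitzWith L f := by
  suffices h : ∀ a b, f b - f a ≤ L * dist a b by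
    refine LipschitzWith.of_dist_le_mul fun a b => abs_sub_le_iff.2 ⟨?_, h a b⟩
    simpa only [dist_comm] using h b a
  intro a b
  rcases eq_or_ne a b with rfl | hab
  · simp
  have hD : 0 < dist a b := dist_pos.2 hab
  obtain ⟨γ, hγ0, hγ1, hγ⟩ := hgeo a b
  have hγc : ContinuousOn γ (Icc 0 1) :=
    (LipschitzOnWith.of_dist_le_mul (K := (dist a b).toNNReal) fun s hs t ht => by
      rw [hγ s hs t ht, Real.coe_toNNReal _ hD.le, Real.dist_eq, mul_comm]).continuousOn
  have key := image_le_of_liminf_slope_right_le_deriv_boundary (hf.comp_continuousOn hγc)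
    (B := fun s => f a + L * dist a b * s) (B' := fun _ => L * dist a b) (by simp [hγ0])
    (by fun_prop)
    (fun s _ => (((hasDerivAt_id s).const_mul _).const_add _).hasDerivWithinAt.congr_deriv
      (mul_one _))
    (fun s hs r hr => (eventually_slope_comp_lt hD hγ hL hs hr).frequently)
    (right_mem_Icc.2 zero_le_one)
  simp only [Function.comp_apply, hγ1, mul_one] at key
  linarith

end Slope

section Coupling

variable {X : Type*} [MeasurableSpace X] {μ ν : Measure X} {π : Measure (X × X)}
  {ρ : X → X → ℝ} {p : ℝ≥0∞}

/-- Unlike `Measure.dirac_bind`, this needs no measurability of `P`. -/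
lemma dirac_bind_eq [MeasurableSingletonClass X] {Y : Type*} [MeasurableSpace Y]
    (P : X → Measure Y) (x : X) : (Measure.dirac x).bind P = P x := by
  have h : P =ᵐ[Measure.dirac x] fun _ => P x := by
    rw [ae_dirac_eq]
    exact eventually_pure.2 rfl
  rw [Measure.bind, Measure.map_congr h, Measure.map_const, measure_univ, one_smul,
    Measure.join_dirac]

lemma isCoupling_dirac (x y : X) :
    IsCoupling (Measure.dirac x) (Measure.dirac y) (Measure.dirac (x, y)) :=
  ⟨Measure.map_dirac' measurable_fst _, Measure.map_dirac' measurable_snd _⟩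

lemma wCost_dirac_le [MeasurableSingletonClass X] (ρ : X → X → ℝ) (hp : p ≠ 0) (x y : X) :
    wCost ρ p (Measure.dirac x) (Measure.dirac y) ≤ ‖ρ x y‖ₑ :=
  (iInf₂_le _ (isCoupling_dirac x y)).trans_eq (eLpNorm_dirac _ _ hp)

lemma exists_isCoupling_lt_of_wCost_lt {c : ℝ≥0∞} (h : wCost ρ p μ ν < c) :
    ∃ π, IsCoupling μ ν π ∧ eLpNorm (fun z => ρ z.1 z.2) p π < c := by
  simpa only [wCost, iInf_lt_iff, exists_prop] using h

/-- The infimum defining `wCost` need not be attained: bound along couplings of cost `≤ c`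
and let `c ↓ t`. -/
lemma le_of_wCost_le {a t : ℝ≥0∞} {Φ : ℝ≥0∞ → ℝ≥0∞} (hW : wCost ρ p μ ν ≤ t) (ht : t ≠ ∞)
    (hΦ : ContinuousAt Φ t)
    (h : ∀ᶠ c in 𝓝 t, ∀ π, IsCoupling μ ν π → eLpNorm (fun z => ρ z.1 z.2) p π ≤ c → a ≤ Φ c) :
    a ≤ Φ t := by
  have : (𝓝[>] t).NeBot := nhdsGT_neBot_of_exists_gt ⟨∞, ht.lt_top⟩
  refine ge_of_tendsto (hΦ.tendsto.mono_left (nhdsWithin_le_nhds (s := Ioi t))) ?_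
  filter_upwards [nhdsWithin_le_nhds h, self_mem_nhdsWithin] with c hc htc
  obtain ⟨π, hπ, hlt⟩ := exists_isCoupling_lt_of_wCost_lt (hW.trans_lt htc)
  exact hc π hπ hlt.le

lemma IsCoupling.lintegral_comp_fst (h : IsCoupling μ ν π) {g : X → ℝ≥0∞} (hg : Measurable g) :
    ∫⁻ z, g z.1 ∂π = ∫⁻ x, g x ∂μ := by
  rw [← h.1, lintegral_map hg measurable_fst]

lemma IsCoupling.ofReal_abs_integral_sub_le (h : IsCoupling μ ν π) {f : X → ℝ}
    (hμ : Integrable f μ) (hν : Integrable f ν) :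
    ENNReal.ofReal |∫ x, f x ∂μ - ∫ x, f x ∂ν| ≤ ∫⁻ z, ENNReal.ofReal |f z.1 - f z.2| ∂π := by
  obtain ⟨rfl, rfl⟩ := h
  rw [integral_map measurable_fst.aemeasurable hμ.1, integral_map measurable_snd.aemeasurable hν.1,
    ← integral_sub (f := fun z : X × X => f z.1) (g := fun z => f z.2)
      (hμ.comp_measurable measurable_fst) (hν.comp_measurable measurable_snd)]
  simpa only [Real.enorm_eq_ofReal_abs] using
    enorm_integral_le_lintegral_enorm (μ := π) fun z => f z.1 - f z.2

end Coupling

section Transport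

variable {X : Type*} [MetricSpace X] [MeasurableSpace X] {μ ν : Measure X}
  {π : Measure (X × X)} {f : X → ℝ}

lemma IsCoupling.ofReal_abs_integral_sub_le_mul_eLpNorm_one (h : IsCoupling μ ν π) {K : ℝ≥0}
    (hf : LipschitzWith K f) (hμ : Integrable f μ) (hν : Integrable f ν) :
    ENNReal.ofReal |∫ x, f x ∂μ - ∫ x, f x ∂ν| ≤ K * eLpNorm (fun z => dist z.1 z.2) 1 π := by
  refine (h.ofReal_abs_integral_sub_le hμ hν).trans ?_
  rw [eLpNorm_one_eq_lintegral_enorm, ← lintegral_const_mul' _ _ ENNReal.coe_ne_top]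
  refine lintegral_mono fun z => ?_
  simpa only [edist_dist, Real.dist_eq, Real.enorm_eq_ofReal dist_nonneg] using
    hf.edist_le_mul z.1 z.2

lemma IsCoupling.ofReal_abs_integral_sub_le_of_eLpNorm_top_le [OpensMeasurableSpace X]
    (h : IsCoupling μ ν π) (hf : Continuous f) (hμ : Integrable f μ) (hν : Integrable f ν)
    {ε : ℝ} {c : ℝ≥0∞} (hc : eLpNorm (fun z => dist z.1 z.2) ∞ π ≤ c)
    (hcε : c < ENNReal.ofReal ε) :
    ENNReal.ofReal |∫ x, f x ∂μ - ∫ x, f x ∂ν| ≤ (∫⁻ x, localSlope f ε x ∂μ) * c := by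
  refine (h.ofReal_abs_integral_sub_le hμ hν).trans ?_
  rw [← h.lintegral_comp_fst (lowerSemicontinuous_localSlope hf ε).measurable,
    ← lintegral_mul_const' _ _ hcε.ne_top]
  refine lintegral_mono_ae ?_
  filter_upwards [ae_le_eLpNormEssSup (μ := π) (f := fun z => dist z.1 z.2)] with z hz
  rw [eLpNorm_exponent_top] at hc
  have hzc : ENNReal.ofReal (dist z.1 z.2) ≤ c := by
    simpa only [Real.enorm_eq_ofReal dist_nonneg] using hz.trans hc
  have hzε : dist z.1 z.2 < ε := (ENNReal.ofReal_lt_ofReal_iff'.1 (hzc.trans_lt hcε)).1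
  exact (ofReal_abs_sub_le_localSlope_mul f hzε).trans (by gcongr)

lemma IsCoupling.ofReal_abs_integral_sub_le_of_holderConjugate [BorelSpace X]
    [SecondCountableTopology X] (h : IsCoupling μ ν π) {K : ℝ≥0} (hf : LipschitzWith K f)
    (hμ : Integrable f μ) (hν : Integrable f ν) {p q : ℝ} (hpq : p.HolderConjugate q) {ε : ℝ}
    (hε : 0 < ε) {c : ℝ≥0∞} (hc : (∫⁻ z, ENNReal.ofReal (dist z.1 z.2) ^ p ∂π) ^ (1 / p) ≤ c) :
    ENNReal.ofReal |∫ x, f x ∂μ - ∫ x, f x ∂ν| ≤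
      ((∫⁻ x, localSlope f ε x ^ q ∂μ) ^ (1 / q) + K / ENNReal.ofReal ε ^ (p - 1) * c ^ (p - 1)) *
        c := by
  set δ : X × X → ℝ≥0∞ := fun z => ENNReal.ofReal (dist z.1 z.2)
  set C := (K : ℝ≥0∞) / ENNReal.ofReal ε ^ (p - 1)
  have hδ : Measurable δ :=
    ENNReal.measurable_ofReal.comp (continuous_fst.dist continuous_snd).measurable
  have hg : Measurable (localSlope f ε) :=
    (lowerSemicontinuous_localSlope hf.continuous ε).measurable
  have hgδ : Measurable fun z : X × X => localSlope f ε z.1 * δ z :=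
    (hg.comp measurable_fst).mul hδ
  have hδc : ∫⁻ z, δ z ^ p ∂π ≤ c ^ p := by
    simpa [← ENNReal.rpow_mul, hpq.ne_zero] using ENNReal.rpow_le_rpow hc hpq.pos.le
  have hHolder :
      ∫⁻ z, localSlope f ε z.1 * δ z ∂π ≤ (∫⁻ x, localSlope f ε x ^ q ∂μ) ^ (1 / q) * c :=
    calc ∫⁻ z, localSlope f ε z.1 * δ z ∂π
        ≤ (∫⁻ z, localSlope f ε z.1 ^ q ∂π) ^ (1 / q) * (∫⁻ z, δ z ^ p ∂π) ^ (1 / p) :=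
          ENNReal.lintegral_mul_le_Lp_mul_Lq π hpq.symm (hg.comp measurable_fst).aemeasurable
            hδ.aemeasurable
      _ ≤ (∫⁻ x, localSlope f ε x ^ q ∂μ) ^ (1 / q) * c := by
          rw [h.lintegral_comp_fst (hg.pow_const q)]
          gcongr
  calc ENNReal.ofReal |∫ x, f x ∂μ - ∫ x, f x ∂ν| ≤ ∫⁻ z, ENNReal.ofReal |f z.1 - f z.2| ∂π :=
        h.ofReal_abs_integral_sub_le hμ hν
    _ ≤ ∫⁻ z, (localSlope f ε z.1 * δ z + C * δ z ^ p) ∂π :=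
        lintegral_mono fun z => ofReal_abs_sub_le_localSlope_mul_add hf hε hpq.lt.le z.1 z.2
    _ = ∫⁻ z, localSlope f ε z.1 * δ z ∂π + C * ∫⁻ z, δ z ^ p ∂π := by
        rw [lintegral_add_left hgδ, lintegral_const_mul _ (hδ.pow_const p)]
    _ ≤ (∫⁻ x, localSlope f ε x ^ q ∂μ) ^ (1 / q) * c + C * c ^ p := by
        gcongr
    _ = _ := by
        rw [← c.rpow_sub_one_mul_self hpq.lt.le]
        ring

end Transport

section Heat

variable {X : Type*} [MetricSpace X] [MeasurableSpace X] {P : X → Measure X} {dt : X → X → ℝ}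

lemma BddLip.integrable [OpensMeasurableSpace X] {f : X → ℝ} (hf : BddLip f) (μ : Measure X)
    [IsFiniteMeasure μ] : Integrable f μ := by
  obtain ⟨⟨C, hC⟩, K, hK⟩ := hf
  exact .of_bound hK.continuous.aestronglyMeasurable C
    (ae_of_all _ fun x => (Real.norm_eq_abs _).trans_le (hC x))

lemma CondC.wCost_le_enorm [BorelSpace X] {p : ℝ≥0∞} (hC : CondC P dt p) (hp : p ≠ 0)
    (x y : X) : wCost dist p (P x) (P y) ≤ ‖dt x y‖ₑ := by
  simpa only [dirac_bind_eq] using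
    (hC _ _ inferInstance inferInstance).trans (wCost_dirac_le dt hp x y)

lemma gradNorm_heatOp_le_of_isCoupling {p : ℝ≥0∞} {f : X → ℝ} {x : X}
    (hW : ∀ y, wCost dist p (P x) (P y) ≤ ‖dt x y‖ₑ) {B : ℝ≥0∞ → ℝ≥0∞} (hB : Continuous B)
    {r : ℝ} (hr : 0 < r)
    (h : ∀ y π c, c < ENNReal.ofReal r → IsCoupling (P x) (P y) π →
      eLpNorm (fun z => dist z.1 z.2) p π ≤ c →
      ENNReal.ofReal |heatOp P f x - heatOp P f y| ≤ B c * c) :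
    gradNorm dt (heatOp P f) x ≤ B 0 := by
  refine gradNorm_le_of_continuousAt hB.continuousAt hr fun y hy hyr => ?_
  refine le_of_wCost_le (Φ := fun c => B c * c) ((hW y).trans_eq (Real.enorm_eq_ofReal hy.le))
    ENNReal.ofReal_ne_top (ENNReal.Tendsto.mul hB.continuousAt.tendsto
      (Or.inr ENNReal.ofReal_ne_top) tendsto_id (Or.inl (ENNReal.ofReal_pos.2 hy).ne')) ?_
  filter_upwards [Iio_mem_nhds ((ENNReal.ofReal_lt_ofReal_iff hr).2 hyr)] with c hc π hπ hle
  exact h y π c hc hπ hle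

lemma condGInf_of_wCost_le [OpensMeasurableSpace X] (hgeo : GeodesicFor (dist : X → X → ℝ))
    (hprob : ∀ x, IsProbabilityMeasure (P x))
    (hW : ∀ x y, wCost dist 1 (P x) (P y) ≤ ‖dt x y‖ₑ) : CondGInf P dt := by
  intro f hf
  set S := ⨆ z, gradNorm dist f z
  rcases eq_or_ne S ∞ with hS | hS
  · exact hS ▸ le_top
  have hLip : LipschitzWith S.toNNReal f := lipschitzWith_of_gradNorm_le hgeo hf.continuous
    fun z => (coe_toNNReal hS).symm ▸ le_iSup (gradNorm dist f) z
  rw [← coe_toNNReal hS]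
  refine iSup_le fun x => gradNorm_heatOp_le_of_isCoupling (B := fun _ => S.toNNReal) (hW x)
    continuous_const one_pos fun y π c _ hπ hc => ?_
  have := hprob x
  have := hprob y
  exact (hπ.ofReal_abs_integral_sub_le_mul_eLpNorm_one hLip (hf.integrable _)
    (hf.integrable _)).trans (by gcongr)

lemma gradNorm_heatOp_le_lintegral_localSlope [BorelSpace X] [SecondCountableTopology X]
    (hprob : ∀ x, IsProbabilityMeasure (P x)) {p q : ℝ≥0∞} [p.HolderConjugate q] (hq : q ≠ ∞)
    (hW : ∀ x y, wCost dist p (P x) (P y) ≤ ‖dt x y‖ₑ) {f : X → ℝ} (hf : BddLip f) {ε : ℝ}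
    (hε : 0 < ε) (x : X) :
    gradNorm dt (heatOp P f) x ≤ (∫⁻ y, localSlope f ε y ^ q.toReal ∂P x) ^ (1 / q.toReal) := by
  have hint : ∀ y, Integrable f (P y) := fun y => by
    have := hprob y
    exact hf.integrable _
  rcases eq_or_ne p ∞ with rfl | hp
  · obtain rfl : q = 1 := (HolderConjugate.eq_top_iff_eq_one ∞ q).1 rfl
    simp only [toReal_one, ENNReal.rpow_one, div_one]
    exact gradNorm_heatOp_le_of_isCoupling (B := fun _ => ∫⁻ y, localSlope f ε y ∂P x) (hW x)
      continuous_const hε fun y π c hc hπ hle =>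
        hπ.ofReal_abs_integral_sub_le_of_eLpNorm_top_le hf.continuous (hint x) (hint y) hle hc
  obtain ⟨K, hK⟩ := hf.2
  have hpq := HolderConjugate.toReal_of_ne_top hp hq
  set C := (K : ℝ≥0∞) / ENNReal.ofReal ε ^ (p.toReal - 1)
  have hC : C ≠ ∞ := ENNReal.div_ne_top coe_ne_top
    (ENNReal.rpow_pos (ENNReal.ofReal_pos.2 hε) ofReal_ne_top).ne'
  refine (gradNorm_heatOp_le_of_isCoupling
    (B := fun c => (∫⁻ y, localSlope f ε y ^ q.toReal ∂P x) ^ (1 / q.toReal) +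
      C * c ^ (p.toReal - 1)) (hW x)
    (continuous_const.add ((ENNReal.continuous_const_mul hC).comp ENNReal.continuous_rpow_const))
    one_pos fun y π c _ hπ hle => ?_).trans_eq ?_
  · rw [eLpNorm_eq_lintegral_rpow_enorm_toReal (HolderConjugate.ne_zero p q) hp] at hle
    simp only [Real.enorm_eq_ofReal dist_nonneg] at hle
    exact hπ.ofReal_abs_integral_sub_le_of_holderConjugate hK (hint x) (hint y) hpq hε hle
  · simp [ENNReal.zero_rpow_of_pos hpq.sub_one_pos]

lemma iInf_lintegral_localSlope_rpow [OpensMeasurableSpace X] {f : X → ℝ} {K : ℝ≥0}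
    (hf : LipschitzWith K f) (μ : Measure X) [IsFiniteMeasure μ] {q : ℝ} (hq : 0 < q) :
    ⨅ n : ℕ, (∫⁻ z, localSlope f (1 / (n + 1)) z ^ q ∂μ) ^ (1 / q) =
      (∫⁻ z, gradNorm dist f z ^ q ∂μ) ^ (1 / q) := by
  have hmeas (n : ℕ) : Measurable fun z => localSlope f (1 / (n + 1)) z ^ q :=
    (lowerSemicontinuous_localSlope hf.continuous _).measurable.pow_const q
  have hanti : Antitone fun (n : ℕ) z => localSlope f (1 / (n + 1)) z ^ q :=
    fun m n hmn z => ENNReal.rpow_le_rpow (localSlope_mono f z (Nat.one_div_le_one_div hmn)) hq.le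
  have hfin : ∫⁻ z, localSlope f (1 / ((0 : ℕ) + 1)) z ^ q ∂μ ≠ ∞ := by
    refine ne_top_of_le_ne_top ?_ (lintegral_mono fun z =>
      ENNReal.rpow_le_rpow (localSlope_le_of_lipschitzWith hf _ z) hq.le)
    rw [lintegral_const]
    exact ENNReal.mul_ne_top (ENNReal.rpow_ne_top_of_nonneg hq.le coe_ne_top)
      (measure_ne_top μ univ)
  rw [← ENNReal.iInf_rpow_of_pos _ (by positivity), ← lintegral_iInf hmeas hanti hfin]
  simp_rw [gradNorm_eq_iInf_localSlope, ENNReal.iInf_rpow_of_pos _ hq]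

lemma condG_of_wCost_le [BorelSpace X] [SecondCountableTopology X]
    (hprob : ∀ x, IsProbabilityMeasure (P x)) {p q : ℝ≥0∞} [p.HolderConjugate q] (hq : q ≠ ∞)
    (hW : ∀ x y, wCost dist p (P x) (P y) ≤ ‖dt x y‖ₑ) : CondG P dt q.toReal := by
  intro f hf x
  have := hprob x
  obtain ⟨K, hK⟩ := hf.2
  rw [← iInf_lintegral_localSlope_rpow hK (P x) (toReal_pos (HolderConjugate.ne_zero q p) hq)]
  exact le_iInf fun n => gradNorm_heatOp_le_lintegral_localSlope hprob hq hW hf (by positivity) x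

end Heat

end Kuwada

open Kuwada in
theorem gradient_estimate_of_wasserstein_control_general
    {X : Type*} [MetricSpace X] [TopologicalSpace.SeparableSpace X]
    [MeasurableSpace X] [BorelSpace X]
    (hgeo : GeodesicFor (dist : X → X → ℝ))
    (dt : X → X → ℝ)
    (P : X → Measure X) (hprob : ∀ x, IsProbabilityMeasure (P x))
    (p q : ℝ≥0∞) (hpq : 1 / p + 1 / q = 1)
    (hC : CondC P dt p) :
    (q ≠ ∞ → CondG P dt q.toReal) ∧ (q = ∞ → CondGInf P dt) := by
  have : p.HolderConjugate q := holderConjugate_iff.2 (by simpa only [one_div] using hpq)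
  have : SecondCountableTopology X := UniformSpace.secondCountable_of_separable X
  have hW := hC.wCost_le_enorm (HolderConjugate.ne_zero p q)
  refine ⟨fun hq => condG_of_wCost_le hprob hq hW, ?_⟩
  rintro rfl
  obtain rfl : p = 1 := (HolderConjugate.eq_top_iff_eq_one ∞ p).1 rfl
  exact condGInf_of_wCost_le hgeo hprob hW

open Kuwada in
/-- Proposition 3.1: `(C_p)` implies `(G_q)` (with `(G_∞)` when `p = 1`), with no
regularity assumption beyond weak continuity of `x ↦ P_x`. -/
theorem gradient_estimate_of_wasserstein_control
    {X : Type*} [MetricSpace X] [CompleteSpace X] [TopologicalSpace.SeparableSpace X]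
    [ProperSpace X] [MeasurableSpace X] [BorelSpace X]
    (hgeo : GeodesicFor (dist : X → X → ℝ))
    (dt : X → X → ℝ) (hdt : IsContDist dt) (hdtgeo : GeodesicFor dt)
    (P : X → Measure X) (hprob : ∀ x, IsProbabilityMeasure (P x))
    (hweak : WeaklyContinuous P)
    (p q : ℝ≥0∞) (hp : 1 ≤ p) (hpq : 1 / p + 1 / q = 1)
    (hC : CondC P dt p) :
    (q ≠ ∞ → CondG P dt q.toReal) ∧ (q = ∞ → CondGInf P dt) :=
  gradient_estimate_of_wasserstein_control_general hgeo dt P hprob p q hpq hC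
end
end

section
/- Let ρ: X×X → [0,∞) be a continuous function. Then for any Borel probability measures μ, ν on X, lim_{p→∞} ρ^W_p(μ,ν) = ρ^W_∞(μ,ν) (as an identity in [0,∞]). -/
open MeasureTheory ENNReal NNReal Metric Set Filter

noncomputable section

/-! Since couplings are probability measures, `p ↦ ρ^W_p` is monotone, so the limit `L` exists
and `L ≤ ρ^W_∞`. Conversely, given `L < b < c`, pick couplings `π_n` with `‖ρ‖_{L^n(π_n)} < b`;
Markov's inequality gives `π_n {ρ > c} ≤ (b/c)^n → 0`. The couplings of two fixed measures on a
Polish space form a compact set (Prokhorov), so a subsequence converges weakly to a coupling `π`,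
and the portmanteau theorem for the open set `{ρ > c}` gives `π {ρ > c} = 0`, i.e. `ρ^W_∞ ≤ c`. -/

open scoped Topology

theorem MeasureTheory.meas_ge_le_eLpNorm_div_rpow {α E : Type*} [MeasurableSpace α]
    [NormedAddCommGroup E] {μ : Measure α} {f : α → E} (hf : AEStronglyMeasurable f μ)
    {q : ℝ} (hq : 0 < q) {c : ℝ≥0∞} (hc : c ≠ 0) :
    μ {x | c ≤ ‖f x‖ₑ} ≤ (eLpNorm f (ENNReal.ofReal q) μ / c) ^ q := by
  have h := meas_ge_le_mul_pow_eLpNorm_enorm μ (by simpa using hq) ofReal_ne_top hf hc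
    fun _ => by simp
  rwa [toReal_ofReal hq.le, mul_comm, ← ENNReal.mul_rpow_of_nonneg _ _ hq.le] at h

namespace Kuwada

section Couplings

variable {X : Type*} [MeasurableSpace X] {μ ν : Measure X}

theorem IsCoupling.isProbabilityMeasure [IsProbabilityMeasure μ] {π : Measure (X × X)}
    (h : IsCoupling μ ν π) : IsProbabilityMeasure π :=
  have : IsProbabilityMeasure (π.map Prod.fst) := h.1 ▸ ‹_›
  Measure.isProbabilityMeasure_of_map Prod.fst

theorem monotone_wCost [IsProbabilityMeasure μ] {ρ : X → X → ℝ}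
    (hρ : Measurable fun z : X × X => ρ z.1 z.2) : Monotone fun p => wCost ρ p μ ν :=
  fun _ _ hpq => iInf₂_mono fun _ hπ =>
    have := hπ.isProbabilityMeasure
    eLpNorm_le_eLpNorm_of_exponent_le hpq hρ.aestronglyMeasurable

end Couplings

section Polish

variable {X : Type*} [TopologicalSpace X] [PolishSpace X] [MeasurableSpace X] [BorelSpace X]

theorem isClosed_setOf_isCoupling (μ ν : Measure X) :
    IsClosed {π : ProbabilityMeasure (X × X) | IsCoupling μ ν π} := by
  have hclosed (m : Measure X) : IsClosed {m' : ProbabilityMeasure X | (m' : Measure X) = m} :=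
    Set.Subsingleton.isClosed fun _ h _ h' => Subtype.ext (h.trans h'.symm)
  exact ((hclosed μ).preimage (ProbabilityMeasure.continuous_map continuous_fst)).inter
    ((hclosed ν).preimage (ProbabilityMeasure.continuous_map continuous_snd))

theorem isCompact_setOf_isCoupling (μ ν : Measure X) [IsFiniteMeasure μ] [IsFiniteMeasure ν] :
    IsCompact {π : ProbabilityMeasure (X × X) | IsCoupling μ ν π} := by
  rw [← (isClosed_setOf_isCoupling μ ν).closure_eq]
  refine isCompact_closure_of_isTightMeasureSet (.prodMk ?_ ?_)
  · refine (isTightMeasureSet_singleton (μ := μ)).subset ?_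
    rintro _ ⟨_, ⟨π, hπ, rfl⟩, rfl⟩
    exact hπ.1
  · refine (isTightMeasureSet_singleton (μ := ν)).subset ?_
    rintro _ ⟨_, ⟨π, hπ, rfl⟩, rfl⟩
    exact hπ.2

theorem exists_isCoupling_measure_eq_zero_of_tendsto {μ ν : Measure X} [IsProbabilityMeasure μ]
    [IsFiniteMeasure ν] {π : ℕ → Measure (X × X)} (hπ : ∀ n, IsCoupling μ ν (π n))
    {U : Set (X × X)} (hU : IsOpen U) (hlim : Tendsto (fun n => π n U) atTop (𝓝 0)) :
    ∃ π₀ : Measure (X × X), IsCoupling μ ν π₀ ∧ π₀ U = 0 := by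
  let P (n : ℕ) : ProbabilityMeasure (X × X) := ⟨π n, (hπ n).isProbabilityMeasure⟩
  obtain ⟨π₀, hπ₀, φ, hφ, hconv⟩ := (isCompact_setOf_isCoupling μ ν).tendsto_subseq (x := P) hπ
  refine ⟨π₀, hπ₀, le_antisymm ?_ bot_le⟩
  calc (π₀ : Measure (X × X)) U
      ≤ liminf (fun k => π (φ k) U) atTop :=
        ProbabilityMeasure.le_liminf_measure_open_of_tendsto hconv hU
    _ = 0 := (hlim.comp hφ.tendsto_atTop).liminf_eq

theorem wCost_top_le_iSup_wCost {μ ν : Measure X} [IsProbabilityMeasure μ]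
    [IsProbabilityMeasure ν] {ρ : X → X → ℝ} (hρ : Continuous fun z : X × X => ρ z.1 z.2) :
    wCost ρ ∞ μ ν ≤ ⨆ p : ℝ, wCost ρ (ENNReal.ofReal p) μ ν := by
  refine le_of_forall_gt_imp_ge_of_dense fun c hc => ?_
  rcases eq_or_ne c ∞ with rfl | hc_top
  · exact le_top
  obtain ⟨b, hLb, hbc⟩ := exists_between hc
  have hc_ne_zero : c ≠ 0 := (bot_le.trans_lt hbc).ne'
  have hratio : b / c < 1 := by
    rwa [ENNReal.div_lt_iff (Or.inl hc_ne_zero) (Or.inl hc_top), one_mul]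
  have hex (n : ℕ) : ∃ π, IsCoupling μ ν π ∧
      eLpNorm (fun z : X × X => ρ z.1 z.2) (ENNReal.ofReal (n + 1)) π < b := by
    have := (le_iSup (fun p : ℝ => wCost ρ (ENNReal.ofReal p) μ ν) (n + 1)).trans_lt hLb
    simpa only [wCost, iInf_lt_iff, exists_prop] using this
  choose π hπ hπb using hex
  set U := {z : X × X | c < ‖ρ z.1 z.2‖ₑ}
  have hbound (n : ℕ) : π n U ≤ (b / c) ^ (n + 1) := by
    calc π n U ≤ π n {z | c ≤ ‖ρ z.1 z.2‖ₑ} :=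
          measure_mono (ofPred_subset_ofPred.2 fun _ => le_of_lt)
      _ ≤ (eLpNorm (fun z : X × X => ρ z.1 z.2) (ENNReal.ofReal (n + 1)) (π n) / c) ^
            ((n : ℝ) + 1) :=
        meas_ge_le_eLpNorm_div_rpow hρ.aestronglyMeasurable (by positivity) hc_ne_zero
      _ ≤ (b / c) ^ ((n : ℝ) + 1) := by gcongr; exact (hπb n).le
      _ = (b / c) ^ (n + 1) := by exact_mod_cast ENNReal.rpow_natCast _ (n + 1)
  have hlim : Tendsto (fun n => π n U) atTop (𝓝 0) :=
    tendsto_of_tendsto_of_tendsto_of_le_of_le tendsto_const_nhds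
      ((ENNReal.tendsto_pow_atTop_nhds_zero_of_lt_one hratio).comp (tendsto_add_atTop_nat 1))
      (fun _ => zero_le) hbound
  obtain ⟨π₀, hπ₀, hU⟩ :=
    exists_isCoupling_measure_eq_zero_of_tendsto hπ (isOpen_lt continuous_const hρ.enorm) hlim
  calc wCost ρ ∞ μ ν ≤ eLpNorm (fun z : X × X => ρ z.1 z.2) ∞ π₀ := iInf₂_le π₀ hπ₀
    _ ≤ c := by
      rw [eLpNorm_exponent_top]
      exact eLpNormEssSup_le_of_ae_enorm_bound (ae_iff.2 (by simpa only [not_le] using hU))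

end Polish

end Kuwada

open Kuwada in
theorem wCost_tendsto_wCost_top_general
    {X : Type*} [MetricSpace X] [CompleteSpace X] [TopologicalSpace.SeparableSpace X]
    [MeasurableSpace X] [BorelSpace X]
    (ρ : X → X → ℝ) (hρcont : Continuous fun z : X × X => ρ z.1 z.2)
    (μ ν : Measure X) (hμ : IsProbabilityMeasure μ) (hν : IsProbabilityMeasure ν) :
    Tendsto (fun p : ℝ => wCost ρ (ENNReal.ofReal p) μ ν) atTop
      (nhds (wCost ρ ∞ μ ν)) := by
  have hmono := monotone_wCost (μ := μ) (ν := ν) hρcont.measurable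
  have hsup : ⨆ p : ℝ, wCost ρ (ENNReal.ofReal p) μ ν = wCost ρ ∞ μ ν :=
    le_antisymm (iSup_le fun _ => hmono le_top) (wCost_top_le_iSup_wCost hρcont)
  exact hsup ▸ tendsto_atTop_iSup (hmono.comp ENNReal.ofReal_mono)

open Kuwada in
/-- Lemma 3.2: for a continuous `ρ : X × X → [0,∞)`,
`lim_{p → ∞} ρ^W_p (μ, ν) = ρ^W_∞ (μ, ν)` (as an identity in `[0,∞]`). -/
theorem wCost_tendsto_wCost_top
    {X : Type*} [MetricSpace X] [CompleteSpace X] [TopologicalSpace.SeparableSpace X]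
    [ProperSpace X] [MeasurableSpace X] [BorelSpace X]
    (hgeo : GeodesicFor (dist : X → X → ℝ))
    (ρ : X → X → ℝ) (hρcont : Continuous fun z : X × X => ρ z.1 z.2)
    (hρnonneg : ∀ x y, 0 ≤ ρ x y)
    (μ ν : Measure X) (hμ : IsProbabilityMeasure μ) (hν : IsProbabilityMeasure ν) :
    Tendsto (fun p : ℝ => wCost ρ (ENNReal.ofReal p) μ ν) atTop
      (nhds (wCost ρ ∞ μ ν)) :=
  wCost_tendsto_wCost_top_general ρ hρcont μ ν hμ hν
end
end

section
/- Let p, p' ∈ [1,∞] with p > p'. If condition (C_p) holds, then condition (C_{p'}) holds. -/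
/-!
Fix a coupling `π` of `μ` and `ν` and cut `X × X` into the countably many bands
`{n δ ≤ dt < (n + 1) δ}`. Renormalised on one band, `π` is a probability measure under which
`dt < (n + 1) δ`, so `(C_p)` together with `W_{p'} ≤ W_p` yields a coupling of the images under
`P*` of its marginals whose `L^{p'}` cost is below `(n + 2) δ ≤ dt + 2 δ`. Since `P*` is countably
additive, these couplings add up to a coupling of `P*μ` and `P*ν` of cost at most
`‖dt + 2 δ‖_{L^{p'}(π)} ≤ ‖dt‖_{L^{p'}(π)} + 2 δ` (Minkowski, `p' ≥ 1`); let `δ → 0`.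
-/

open MeasureTheory ENNReal NNReal Metric Set Filter

noncomputable section

namespace MeasureTheory

variable {α β E F : Type*} [MeasurableSpace α] [MeasurableSpace β] [NormedAddCommGroup E]
  [NormedAddCommGroup F] {p : ℝ≥0∞}

lemma eLpNorm_le_iff_lintegral_enorm_rpow_le (hp0 : p ≠ 0) (hp : p ≠ ⊤) {f : α → E}
    {μ : Measure α} {r : ℝ≥0∞} :
    eLpNorm f p μ ≤ r ↔ ∫⁻ x, ‖f x‖ₑ ^ p.toReal ∂μ ≤ r ^ p.toReal := by
  rw [eLpNorm_eq_lintegral_rpow_enorm_toReal hp0 hp, one_div,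
    ENNReal.rpow_inv_le_iff (ENNReal.toReal_pos hp0 hp)]

lemma eLpNorm_le_eLpNorm_of_lintegral_enorm_rpow_le (hp0 : p ≠ 0) (hp : p ≠ ⊤) {f : α → E}
    {g : β → F} {μ : Measure α} {ν : Measure β}
    (h : ∫⁻ x, ‖f x‖ₑ ^ p.toReal ∂μ ≤ ∫⁻ y, ‖g y‖ₑ ^ p.toReal ∂ν) :
    eLpNorm f p μ ≤ eLpNorm g p ν := by
  rw [eLpNorm_eq_lintegral_rpow_enorm_toReal hp0 hp, eLpNorm_eq_lintegral_rpow_enorm_toReal hp0 hp]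
  gcongr

lemma Measure.sum_restrict_preimage_singleton [Countable β] [MeasurableSingletonClass β]
    (μ : Measure α) {g : α → β} (hg : Measurable g) :
    Measure.sum (fun b => μ.restrict (g ⁻¹' {b})) = μ := by
  rw [← Measure.restrict_iUnion (fun a b hab => (disjoint_singleton.2 hab).preimage g)
    fun b => hg (measurableSet_singleton b), ← preimage_iUnion, iUnion_of_singleton,
    preimage_univ, Measure.restrict_univ]

end MeasureTheory

namespace Kuwada

section Coupling

variable {X : Type*} [MeasurableSpace X] {μ ν : Measure X} {π : Measure (X × X)}

namespace IsCoupling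

lemma isProbabilityMeasure_s7 [IsProbabilityMeasure μ] (hπ : IsCoupling μ ν π) :
    IsProbabilityMeasure π :=
  have : IsProbabilityMeasure (π.map Prod.fst) := hπ.1 ▸ ‹_›
  Measure.isProbabilityMeasure_of_map Prod.fst

lemma smul (hπ : IsCoupling μ ν π) (c : ℝ≥0∞) : IsCoupling (c • μ) (c • ν) (c • π) :=
  ⟨by rw [Measure.map_smul, hπ.1], by rw [Measure.map_smul, hπ.2]⟩

lemma sum {ι : Type*} {μ ν : ι → Measure X} {π : ι → Measure (X × X)}
    (hπ : ∀ i, IsCoupling (μ i) (ν i) (π i)) :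
    IsCoupling (Measure.sum μ) (Measure.sum ν) (Measure.sum π) :=
  ⟨by simp only [Measure.map_sum measurable_fst.aemeasurable, fun i => (hπ i).1],
   by simp only [Measure.map_sum measurable_snd.aemeasurable, fun i => (hπ i).2]⟩

lemma sum_bind {ι : Type*} {P : X → Measure X} (hP : Measurable P) {m κ : ι → Measure (X × X)}
    (hκ : ∀ i, IsCoupling (((m i).map Prod.fst).bind P) (((m i).map Prod.snd).bind P) (κ i)) :
    IsCoupling (((Measure.sum m).map Prod.fst).bind P) (((Measure.sum m).map Prod.snd).bind P)
      (Measure.sum κ) := by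
  rw [Measure.map_sum measurable_fst.aemeasurable, Measure.map_sum measurable_snd.aemeasurable,
    Measure.bind_sum _ _ hP.aemeasurable, Measure.bind_sum _ _ hP.aemeasurable]
  exact IsCoupling.sum hκ

end IsCoupling

variable {ρ : X → X → ℝ} {p q : ℝ≥0∞}

lemma wCost_le_eLpNorm (hπ : IsCoupling μ ν π) :
    wCost ρ p μ ν ≤ eLpNorm (fun z => ρ z.1 z.2) p π :=
  iInf₂_le π hπ

lemma exists_isCoupling_eLpNorm_lt {r : ℝ≥0∞} (h : wCost ρ p μ ν < r) :
    ∃ π, IsCoupling μ ν π ∧ eLpNorm (fun z => ρ z.1 z.2) p π < r := by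
  simpa only [wCost, iInf_lt_iff, exists_prop] using h

lemma wCost_mono_exponent [IsProbabilityMeasure μ] (hρ : Measurable fun z : X × X => ρ z.1 z.2)
    (hqp : q ≤ p) : wCost ρ q μ ν ≤ wCost ρ p μ ν :=
  le_iInf₂ fun _ hπ =>
    have := hπ.isProbabilityMeasure_s7
    (wCost_le_eLpNorm hπ).trans (eLpNorm_le_eLpNorm_of_exponent_le hqp hρ.aestronglyMeasurable)

end Coupling

variable {X : Type*} [MetricSpace X]

lemma IsContDist.nonneg {dt : X → X → ℝ} (hdt : IsContDist dt) (x y : X) : 0 ≤ dt x y := by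
  have h := hdt.triangle x y x
  rw [(hdt.eq_zero_iff x x).mpr rfl, hdt.symm y x] at h
  linarith

variable [MeasurableSpace X] [BorelSpace X] {P : X → Measure X}

/-- By the portmanteau theorem `x ↦ P x U` is lower semicontinuous for open `U`, and open sets
form a π-system generating the Borel σ-algebra. -/
lemma WeaklyContinuous.measurable [∀ x, IsProbabilityMeasure (P x)] (hP : WeaklyContinuous P) :
    Measurable P := by
  let Q : X → ProbabilityMeasure X := fun x => ⟨P x, inferInstance⟩
  have hQ : Continuous Q := continuous_iff_continuousAt.2 fun x =>
    ProbabilityMeasure.tendsto_iff_forall_integral_tendsto.2 fun f => (hP f).continuousAt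
  refine .measure_of_isPiSystem_of_isProbabilityMeasure BorelSpace.measurable_eq
    isPiSystem_isOpen fun U hU => LowerSemicontinuous.measurable fun x c hc => ?_
  exact eventually_lt_of_lt_liminf
    (hc.trans_le (ProbabilityMeasure.le_liminf_measure_open_of_tendsto (hQ.tendsto x) hU))

variable {dt : X → X → ℝ} {p q : ℝ≥0∞}

lemma CondC.wCost_bind_le_eLpNorm [SecondCountableTopology X] [∀ x, IsProbabilityMeasure (P x)]
    (hC : CondC P dt p) (hP : Measurable P) (hqp : q ≤ p) (m : Measure (X × X))
    [IsProbabilityMeasure m] :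
    wCost dist q ((m.map Prod.fst).bind P) ((m.map Prod.snd).bind P)
      ≤ eLpNorm (fun z => dt z.1 z.2) p m := by
  have hmarginal (f : X × X → X) (hf : Measurable f) :
      IsProbabilityMeasure (m.map f) ∧ IsProbabilityMeasure ((m.map f).bind P) :=
    have := Measure.isProbabilityMeasure_map (μ := m) hf.aemeasurable
    ⟨this, isProbabilityMeasure_bind hP.aemeasurable (ae_of_all _ inferInstance)⟩
  obtain ⟨_, _⟩ := hmarginal _ measurable_fst
  obtain ⟨_, _⟩ := hmarginal _ measurable_snd
  calc wCost dist q ((m.map Prod.fst).bind P) ((m.map Prod.snd).bind P)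
      ≤ wCost dist p ((m.map Prod.fst).bind P) ((m.map Prod.snd).bind P) :=
        wCost_mono_exponent measurable_dist hqp
    _ ≤ wCost dt p (m.map Prod.fst) (m.map Prod.snd) := hC _ _ inferInstance inferInstance
    _ ≤ eLpNorm (fun z => dt z.1 z.2) p m := wCost_le_eLpNorm ⟨rfl, rfl⟩

lemma CondC.exists_isCoupling_bind [SecondCountableTopology X] [∀ x, IsProbabilityMeasure (P x)]
    (hC : CondC P dt p) (hP : Measurable P) (hqp : q ≤ p) (hq0 : q ≠ 0) (hq : q ≠ ⊤)
    (m : Measure (X × X)) [IsFiniteMeasure m] {b r : ℝ≥0∞}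
    (hb : ∀ᵐ z ∂m, ‖dt z.1 z.2‖ₑ ≤ b) (hbr : b < r) :
    ∃ κ, IsCoupling ((m.map Prod.fst).bind P) ((m.map Prod.snd).bind P) κ ∧
      ∫⁻ z, ‖dist z.1 z.2‖ₑ ^ q.toReal ∂κ ≤ m univ * r ^ q.toReal := by
  rcases eq_zero_or_neZero m with rfl | hm
  · exact ⟨0, by simp [IsCoupling]⟩
  set m' := (m univ)⁻¹ • m
  have hm' : eLpNorm (fun z => dt z.1 z.2) p m' ≤ b := by
    simpa using eLpNorm_le_of_ae_enorm_bound (p := p) (Measure.ae_smul_measure hb (m univ)⁻¹)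
  obtain ⟨κ, hκ, hκr⟩ :=
    exists_isCoupling_eLpNorm_lt (((hC.wCost_bind_le_eLpNorm hP hqp m').trans hm').trans_lt hbr)
  refine ⟨m univ • κ, ?_, ?_⟩
  · have hm'm : m univ • m' = m := by
      rw [smul_smul, ENNReal.mul_inv_cancel (NeZero.ne _) (measure_ne_top _ _), one_smul]
    simpa only [← Measure.bind_smul, ← Measure.map_smul, hm'm] using hκ.smul (m univ)
  · rw [lintegral_smul_measure]
    exact mul_le_mul_right ((eLpNorm_le_iff_lintegral_enorm_rpow_le hq0 hq).1 hκr.le) _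

lemma CondC.exists_isCoupling_bind_restrict [SecondCountableTopology X]
    [∀ x, IsProbabilityMeasure (P x)] (hC : CondC P dt p) (hP : Measurable P) (hqp : q ≤ p)
    (hq0 : q ≠ 0) (hq : q ≠ ⊤) (π : Measure (X × X)) [IsFiniteMeasure π] {s : Set (X × X)}
    (hs : MeasurableSet s) {a δ : ℝ} (ha : 0 ≤ a) (hδ : 0 < δ)
    (hband : ∀ z ∈ s, a ≤ dt z.1 z.2 ∧ dt z.1 z.2 ≤ a + δ) :
    ∃ κ, IsCoupling (((π.restrict s).map Prod.fst).bind P)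
        (((π.restrict s).map Prod.snd).bind P) κ ∧
      ∫⁻ z, ‖dist z.1 z.2‖ₑ ^ q.toReal ∂κ ≤ ∫⁻ z in s, ‖dt z.1 z.2 + 2 * δ‖ₑ ^ q.toReal ∂π := by
  obtain ⟨κ, hκ, hκ_cost⟩ := hC.exists_isCoupling_bind hP hqp hq0 hq (π.restrict s)
    (b := ENNReal.ofReal (a + δ)) (r := ENNReal.ofReal (a + 2 * δ))
    ((ae_restrict_mem hs).mono fun z hz => by
      rw [Real.enorm_eq_ofReal (ha.trans (hband z hz).1)]
      exact ENNReal.ofReal_le_ofReal (hband z hz).2)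
    ((ENNReal.ofReal_lt_ofReal_iff (by positivity)).2 (by linarith))
  refine ⟨κ, hκ, hκ_cost.trans ?_⟩
  calc π.restrict s univ * ENNReal.ofReal (a + 2 * δ) ^ q.toReal
      = ∫⁻ _ in s, ENNReal.ofReal (a + 2 * δ) ^ q.toReal ∂π := by
        rw [setLIntegral_const, Measure.restrict_apply_univ, mul_comm]
    _ ≤ ∫⁻ z in s, ‖dt z.1 z.2 + 2 * δ‖ₑ ^ q.toReal ∂π :=
      setLIntegral_mono' hs fun z hz => by
        rw [Real.enorm_eq_ofReal (by linarith [(hband z hz).1])]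
        gcongr
        linarith [(hband z hz).1]

lemma CondC.wCost_bind_le_eLpNorm_add [SecondCountableTopology X]
    [∀ x, IsProbabilityMeasure (P x)] (hC : CondC P dt p) (hP : Measurable P)
    (hdt : Measurable fun z : X × X => dt z.1 z.2) (hdt0 : ∀ x y, 0 ≤ dt x y) (hqp : q ≤ p)
    (hq1 : 1 ≤ q) (hq : q ≠ ⊤) {μ ν : Measure X} [IsProbabilityMeasure μ] {π : Measure (X × X)}
    (hπ : IsCoupling μ ν π) {δ : ℝ} (hδ : 0 < δ) :
    wCost dist q (μ.bind P) (ν.bind P)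
      ≤ eLpNorm (fun z => dt z.1 z.2) q π + ENNReal.ofReal (2 * δ) := by
  have := hπ.isProbabilityMeasure_s7
  have hq0 : q ≠ 0 := (zero_lt_one.trans_le hq1).ne'
  have hfloor : Measurable fun z : X × X => ⌊dt z.1 z.2 / δ⌋₊ := (hdt.div_const δ).nat_floor
  let band : ℕ → Set (X × X) := fun n => (fun z => ⌊dt z.1 z.2 / δ⌋₊) ⁻¹' {n}
  have hband (n : ℕ) (z : X × X) (hz : z ∈ band n) :
      n * δ ≤ dt z.1 z.2 ∧ dt z.1 z.2 ≤ n * δ + δ := by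
    have := (Nat.floor_eq_iff (div_nonneg (hdt0 _ _) hδ.le)).1 hz
    rw [le_div_iff₀ hδ, div_lt_iff₀ hδ] at this
    exact ⟨this.1, by linarith⟩
  choose κ hκ hκ_cost using fun n => hC.exists_isCoupling_bind_restrict hP hqp hq0 hq π
    (hfloor (measurableSet_singleton n)) (by positivity) hδ (hband n)
  have hπ_sum : π = Measure.sum fun n => π.restrict (band n) :=
    (Measure.sum_restrict_preimage_singleton π hfloor).symm
  have hcoupling : IsCoupling (μ.bind P) (ν.bind P) (Measure.sum κ) := by
    rw [← hπ.1, ← hπ.2, hπ_sum]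
    exact IsCoupling.sum_bind hP hκ
  have hcost : ∫⁻ z, ‖dist z.1 z.2‖ₑ ^ q.toReal ∂(Measure.sum κ)
      ≤ ∫⁻ z, ‖dt z.1 z.2 + 2 * δ‖ₑ ^ q.toReal ∂π := by
    rw [lintegral_sum_measure, hπ_sum, lintegral_sum_measure]
    exact ENNReal.tsum_le_tsum hκ_cost
  calc wCost dist q (μ.bind P) (ν.bind P)
      ≤ eLpNorm (fun z => dist z.1 z.2) q (Measure.sum κ) := wCost_le_eLpNorm hcoupling
    _ ≤ eLpNorm (fun z => dt z.1 z.2 + 2 * δ) q π :=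
      eLpNorm_le_eLpNorm_of_lintegral_enorm_rpow_le hq0 hq hcost
    _ ≤ eLpNorm (fun z => dt z.1 z.2) q π + eLpNorm (fun _ => 2 * δ) q π :=
      eLpNorm_add_le hdt.aestronglyMeasurable aestronglyMeasurable_const hq1
    _ = eLpNorm (fun z => dt z.1 z.2) q π + ENNReal.ofReal (2 * δ) := by
      rw [eLpNorm_const _ hq0 (NeZero.ne π), measure_univ, ENNReal.one_rpow, mul_one,
        Real.enorm_eq_ofReal (by positivity)]

end Kuwada

open Kuwada in
theorem condC_mono_general
    {X : Type*} [MetricSpace X] [TopologicalSpace.SeparableSpace X]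
    [MeasurableSpace X] [BorelSpace X]
    (dt : X → X → ℝ) (hdt : IsContDist dt)
    (P : X → Measure X) (hprob : ∀ x, IsProbabilityMeasure (P x))
    (hweak : WeaklyContinuous P)
    (p p' : ℝ≥0∞) (hp' : 1 ≤ p') (hpp' : p' < p)
    (hC : CondC P dt p) :
    CondC P dt p' := by
  have : SecondCountableTopology X := UniformSpace.secondCountable_of_separable X
  intro μ ν _ _
  refine le_iInf₂ fun π hπ => ENNReal.le_of_forall_pos_le_add fun ε hε _ => ?_
  have := hC.wCost_bind_le_eLpNorm_add hweak.measurable hdt.cont.measurable hdt.nonneg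
    hpp'.le hp' hpp'.ne_top hπ (half_pos hε)
  rw [mul_div_cancel₀ _ two_ne_zero] at this
  simpa using this

open Kuwada in
/-- Corollary 3.4: `(C_p)` implies `(C_{p'})` whenever `1 ≤ p' < p ≤ ∞`. -/
theorem condC_mono
    {X : Type*} [MetricSpace X] [CompleteSpace X] [TopologicalSpace.SeparableSpace X]
    [ProperSpace X] [MeasurableSpace X] [BorelSpace X]
    (hgeo : GeodesicFor (dist : X → X → ℝ))
    (dt : X → X → ℝ) (hdt : IsContDist dt) (hdtgeo : GeodesicFor dt)
    (P : X → Measure X) (hprob : ∀ x, IsProbabilityMeasure (P x))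
    (hweak : WeaklyContinuous P)
    (p p' : ℝ≥0∞) (hp' : 1 ≤ p') (hpp' : p' < p)
    (hC : CondC P dt p) :
    CondC P dt p' :=
  condC_mono_general dt hdt P hprob hweak p p' hp' hpp' hC
end
end
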